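/- There is a constant C > 0 such that the following is true. Let Φ be a satisfiable 2-CNF formula and σ* a satisfying assignment of Φ. Then for all x ∈ V(Φ), the expectation over the random choices of WalkSAT satisfies E[N(Φ, σ*(x)·x)] ≤ C · |ℒ(Φ, {σ*(x)·x})|². -/

import Mathlib

open Filter

open scoped Classical

/-- A literal is a sign (`true` = positive) together with a variable. -/
abbrev Lit (V : Type) := Bool × V

/-- A 2-clause is a disjunction of two literals. -/
abbrev Clause (V : Type) := Lit V × Lit V

/-- A 2-CNF is a finite list of 2-clauses. -/
abbrev CNF (V : Type) := List (Clause V)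

/-- The negation of a literal. -/
def Lit.negate {V : Type} (l : Lit V) : Lit V := (!l.1, l.2)

/-- A literal is satisfied by an assignment if the variable is assigned its sign. -/
def litSat {V : Type} (σ : V → Bool) (l : Lit V) : Prop := σ l.2 = l.1

/-- A clause is satisfied if one of its two literals is. -/
def clauseSat {V : Type} (σ : V → Bool) (c : Clause V) : Prop := litSat σ c.1 ∨ litSat σ c.2

/-- A 2-CNF is satisfied if all of its clauses are. -/
def cnfSat {V : Type} (σ : V → Bool) (Φ : CNF V) : Prop := ∀ c ∈ Φ, clauseSat σ c

instance {V : Type} (σ : V → Bool) (l : Lit V) : Decidable (litSat σ l) := by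
  unfold litSat; infer_instance

instance {V : Type} (σ : V → Bool) (c : Clause V) : Decidable (clauseSat σ c) := by
  unfold clauseSat; infer_instance

instance {V : Type} (σ : V → Bool) (Φ : CNF V) : Decidable (cnfSat σ Φ) := by
  unfold cnfSat; infer_instance

/-- In a proper 2-CNF, the two literals of each clause have distinct variables. -/
def validCNF {V : Type} (Φ : CNF V) : Prop := ∀ c ∈ Φ, c.1.2 ≠ c.2.2

/-- A set `L` of literals is closed under Unit Clause Propagation on `Φ`:
whenever a clause can be written `¬ l' ∨ l''` with `l' ∈ L`, also `l'' ∈ L`. -/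
def ucpClosed {V : Type} (Φ : CNF V) (L : Set (Lit V)) : Prop :=
  ∀ c ∈ Φ, (Lit.negate c.1 ∈ L → c.2 ∈ L) ∧ (Lit.negate c.2 ∈ L → c.1 ∈ L)

/-- `ℒ(Φ, {l})`: the set of literals produced by UCP from `{l}`, i.e. the least
set containing `l` that is closed under unit clause propagation. -/
def ucpLits {V : Type} (Φ : CNF V) (l : Lit V) : Set (Lit V) :=
  ⋂₀ {L : Set (Lit V) | l ∈ L ∧ ucpClosed Φ L}

/-- `𝒱(Φ, {l})`: the variables underlying `ℒ(Φ, {l})`. -/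
def ucpVars {V : Type} (Φ : CNF V) (l : Lit V) : Set V := Prod.snd '' ucpLits Φ l

/-! ### WalkSAT -/

/-- Flip the value of variable `v` in assignment `σ`. -/
def flipVar {V : Type} [DecidableEq V] (σ : V → Bool) (v : V) : V → Bool :=
  fun u => if u = v then !σ u else σ u

/-- The list of clauses of `Φ` violated by `σ`. -/
def violated {V : Type} (Φ : CNF V) (σ : V → Bool) : List (Clause V) :=
  Φ.filter fun c => decide (¬ clauseSat σ c)

/-- One step of WalkSAT, driven by a random seed `s`.  If `σ` violates some clause,
then a violated clause is selected via `s.1 % (number of violated clauses)`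
(this is a uniformly random violated clause, since `s.1` is uniform on
`Fin (Φ.length)!` and the number of violated clauses divides `(Φ.length)!`),
one of its two literals is selected via the uniform bit `s.2`, and the underlying
variable is flipped.  If `σ` satisfies `Φ`, nothing happens. -/
def wsNext {V : Type} [DecidableEq V] (Φ : CNF V) (s : ℕ × Bool) (σ : V → Bool) : V → Bool :=
  if h : (violated Φ σ).length = 0 then σ
  else
    let c := (violated Φ σ).get ⟨s.1 % (violated Φ σ).length, Nat.mod_lt _ (Nat.pos_of_ne_zero h)⟩
    flipVar σ (if s.2 then c.1.2 else c.2.2)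

/-- The space of random seeds driving one run of WalkSAT on `Φ` (at most
`100 n²` steps, each using an independent uniform pair).  The uniform measure on
this finite space makes each step's clause/literal choices uniform and independent. -/
abbrev wsSeedSpace (V : Type) [Fintype V] (Φ : CNF V) : Type :=
  Fin (100 * (Fintype.card V) ^ 2) → Fin (Nat.factorial Φ.length) × Bool

/-- `σ^{(t)}`: the WalkSAT assignment after `t` steps, starting from the all-true
assignment, for the realization `ω` of the random seeds.  After `100 n²` steps, or
once `Φ` is satisfied, the assignment no longer changes. -/
def wsState {V : Type} [Fintype V] [DecidableEq V] (Φ : CNF V) (ω : wsSeedSpace V Φ) :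
    ℕ → (V → Bool)
  | 0 => fun _ => true
  | t + 1 =>
    if h : t < 100 * (Fintype.card V) ^ 2 then
      wsNext Φ (((ω ⟨t, h⟩).1 : ℕ), (ω ⟨t, h⟩).2) (wsState Φ ω t)
    else wsState Φ ω t

/-- `T(Φ)`: the total number of flips WalkSAT performs, i.e. the first time the
current assignment satisfies `Φ` (capped at the time limit `100 n²`). -/
noncomputable def wsT {V : Type} [Fintype V] [DecidableEq V] (Φ : CNF V)
    (ω : wsSeedSpace V Φ) : ℕ :=
  sInf ({t | cnfSat (wsState Φ ω t) Φ} ∪ {100 * (Fintype.card V) ^ 2})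

/-- `N(Φ, l)`: the total number of times WalkSAT flips variables from `𝒱(Φ,{l})`. -/
noncomputable def wsN {V : Type} [Fintype V] [DecidableEq V] (Φ : CNF V)
    (ω : wsSeedSpace V Φ) (l : Lit V) : ℕ :=
  ∑ v ∈ (Set.toFinite (ucpVars Φ l)).toFinset,
    ∑ t ∈ Finset.Icc 1 (wsT Φ ω),
      if wsState Φ ω (t - 1) v ≠ wsState Φ ω t v then 1 else 0

/-- Expectation over the random choices of WalkSAT (uniform over all seeds). -/
noncomputable def wsExp {V : Type} [Fintype V] [DecidableEq V] (Φ : CNF V)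
    (g : wsSeedSpace V Φ → ℝ) : ℝ :=
  (∑ ω : wsSeedSpace V Φ, g ω) / (Fintype.card (wsSeedSpace V Φ) : ℝ)

/-! ### The random formula `Φ_{n,m}` -/

/-- A sample point for the random 2-CNF: an ordered tuple of `m` clauses on the
variables `x₁, …, xₙ`. -/
abbrev FSpace (n m : ℕ) : Type := Fin m → Clause (Fin n)

/-- The 2-CNF corresponding to a sample point. -/
def toCNF {n m : ℕ} (f : FSpace n m) : CNF (Fin n) := List.ofFn f

/-- The set of proper sample points: each of the `m` clauses is one of the
`4n(n-1)` 2-clauses on two distinct variables.  The uniform distribution on this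
finite set is exactly the distribution of `Φ_{n,m}` (m independent uniform clauses). -/
noncomputable def validFormulas (n m : ℕ) : Finset (FSpace n m) :=
  Finset.univ.filter fun f => ∀ i, (f i).1.2 ≠ (f i).2.2

/-- Probability of an event under the random 2-CNF `Φ_{n,m}`. -/
noncomputable def prF (n m : ℕ) (P : FSpace n m → Prop) : ℝ :=
  (((validFormulas n m).filter fun f => P f).card : ℝ) / ((validFormulas n m).card : ℝ)

/-- Expectation of a functional of the random 2-CNF `Φ_{n,m}`. -/
noncomputable def expF (n m : ℕ) (g : FSpace n m → ℝ) : ℝ :=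
  (∑ f ∈ validFormulas n m, g f) / ((validFormulas n m).card : ℝ)

/-- `X(Φ) = Σ_x (|𝒱(Φ,{x})|² + |𝒱(Φ,{¬x})|²)`. -/
noncomputable def Xval (n : ℕ) (Φ : CNF (Fin n)) : ℝ :=
  ∑ x : Fin n,
    (((ucpVars Φ (true, x)).ncard : ℝ) ^ 2 + ((ucpVars Φ (false, x)).ncard : ℝ) ^ 2)


/-!
Let `U = 𝒱(Φ, {l})` with `l = σ*(x)·x`, and let `a(σ)` count the variables of `U` on which `σ`
agrees with `σ*`. The literals of `ℒ(Φ, {l})` are exactly the `σ*`-true literals on `U`, so UCP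
closure says: if `σ` violates a clause and agrees with `σ*` on one of its variables in `U`, then
the other variable lies in `U` and `σ` disagrees with `σ*` there. Flipping a uniformly random
variable of a violated clause therefore increases `a(σ)²` in expectation by at least the expected
number of flips inside `U`. Summing over the run, and using `0 ≤ a² ≤ |U|²`,
`E[N] ≤ |U|² ≤ |ℒ(Φ, {l})|²`, so `C = 1` works.
-/

open Finset

section UnitPropagation

variable {V : Type} {Φ : CNF V}

lemma ucpLits_subset {l : Lit V} {L : Set (Lit V)} (hl : l ∈ L) (hL : ucpClosed Φ L) :
    ucpLits Φ l ⊆ L :=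
  Set.sInter_subset_of_mem ⟨hl, hL⟩

lemma ucpClosed_ucpLits (l : Lit V) : ucpClosed Φ (ucpLits Φ l) := fun c hc =>
  ⟨fun h L hL => (hL.2 c hc).1 (h L hL), fun h L hL => (hL.2 c hc).2 (h L hL)⟩

lemma ucpClosed_setOf_litSat {σ : V → Bool} (hΦ : cnfSat σ Φ) :
    ucpClosed Φ {l | litSat σ l} := by
  intro c hc
  rcases hΦ c hc with h | h <;> simp_all [litSat, Lit.negate]

lemma eq_of_litSat {σ : V → Bool} {l l' : Lit V} (h : litSat σ l) (h' : litSat σ l')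
    (hvar : l.2 = l'.2) : l = l' :=
  Prod.ext (h.symm.trans (hvar ▸ h')) hvar

lemma ucpLits_eq_setOf {σ : V → Bool} {l : Lit V} (hΦ : cnfSat σ Φ) (hl : litSat σ l) :
    ucpLits Φ l = {l' | l'.2 ∈ ucpVars Φ l ∧ litSat σ l'} := by
  have hsat : ∀ l' ∈ ucpLits Φ l, litSat σ l' := ucpLits_subset hl (ucpClosed_setOf_litSat hΦ)
  ext l'
  refine ⟨fun h => ⟨⟨l', h, rfl⟩, hsat l' h⟩, ?_⟩
  rintro ⟨⟨l'', h'', hvar⟩, hl'⟩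
  rwa [← eq_of_litSat (hsat l'' h'') hl' hvar]

/-- `σstar` falsifies `l₁` as `σ` does, so propagation forces `l₂`, which `σ` falsifies. -/
lemma mem_and_ne_of_violated {U : Finset V} {σstar σ : V → Bool} {l₁ l₂ : Lit V}
    (hprop : Lit.negate l₁ ∈ {l | l.2 ∈ U ∧ litSat σstar l} →
      l₂ ∈ {l | l.2 ∈ U ∧ litSat σstar l})
    (h₁ : ¬ litSat σ l₁) (h₂ : ¬ litSat σ l₂) (hmem : l₁.2 ∈ U)
    (hagree : σ l₁.2 = σstar l₁.2) :
    l₂.2 ∈ U ∧ σ l₂.2 ≠ σstar l₂.2 := by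
  have hneg : litSat σstar (Lit.negate l₁) := by
    simp only [litSat, Lit.negate] at h₁ ⊢
    exact hagree ▸ Bool.eq_not.2 h₁
  obtain ⟨hmem₂, hsat₂⟩ := hprop ⟨hmem, hneg⟩
  exact ⟨hmem₂, fun h => h₂ (h.trans hsat₂)⟩

end UnitPropagation

section Flips

variable {V : Type}

def agreeCount (U : Finset V) (σstar σ : V → Bool) : ℕ := #{v ∈ U | σ v = σstar v}

def flipCount (U : Finset V) (σ σ' : V → Bool) : ℕ := ∑ v ∈ U, if σ v ≠ σ' v then 1 else 0

lemma agreeCount_le_card (U : Finset V) (σstar σ : V → Bool) : agreeCount U σstar σ ≤ #U :=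
  card_filter_le _ _

variable [DecidableEq V]

@[simp]
lemma flipVar_self (σ : V → Bool) (u : V) : flipVar σ u u = !σ u := if_pos rfl

@[simp]
lemma flipVar_of_ne (σ : V → Bool) {u v : V} (h : v ≠ u) : flipVar σ u v = σ v := if_neg h

lemma flipCount_flipVar (U : Finset V) (σ : V → Bool) (u : V) :
    flipCount U σ (flipVar σ u) = if u ∈ U then 1 else 0 := by
  have h : ∀ v, σ v ≠ flipVar σ u v ↔ v = u := fun v => by
    by_cases hvu : v = u
    · subst hvu; simp
    · simp [hvu]
  simp only [flipCount, h, sum_ite_eq']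

lemma agreeCount_flipVar (U : Finset V) (σstar σ : V → Bool) (u : V) :
    (agreeCount U σstar (flipVar σ u) : ℝ) =
      agreeCount U σstar σ + if u ∈ U then (if σ u = σstar u then -1 else 1) else 0 := by
  have hrest : ∀ s : Finset V, u ∉ s →
      ∑ v ∈ s, (if flipVar σ u v = σstar v then 1 else 0 : ℝ) =
        ∑ v ∈ s, if σ v = σstar v then 1 else 0 := fun s hu =>
    sum_congr rfl fun v hv => by rw [flipVar_of_ne σ (ne_of_mem_of_not_mem hv hu)]
  simp only [agreeCount, card_filter, Nat.cast_sum, Nat.cast_ite, Nat.cast_one, Nat.cast_zero]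
  by_cases hu : u ∈ U
  · rw [if_pos hu, ← add_sum_erase U _ hu, ← add_sum_erase U _ hu,
      hrest _ (notMem_erase u U)]
    cases h : σ u <;> cases σstar u <;> simp [h] <;> ring
  · rw [if_neg hu, hrest U hu, add_zero]

end Flips

section WalkSATStep

variable {V : Type} [DecidableEq V] {Φ : CNF V} {σstar σ : V → Bool} {U : Finset V}

lemma flipCount_le_agreeCount_sq_gain
    (hU : ucpClosed Φ {l | l.2 ∈ U ∧ litSat σstar l}) {c : Clause V} (hc : c ∈ Φ)
    (hviol : ¬ clauseSat σ c) :
    (flipCount U σ (flipVar σ c.1.2) + flipCount U σ (flipVar σ c.2.2) : ℝ) ≤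
      ((agreeCount U σstar (flipVar σ c.1.2) : ℝ) ^ 2 - (agreeCount U σstar σ : ℝ) ^ 2) +
        ((agreeCount U σstar (flipVar σ c.2.2) : ℝ) ^ 2 - (agreeCount U σstar σ : ℝ) ^ 2) := by
  have h₁ : ¬ litSat σ c.1 := fun h => hviol (Or.inl h)
  have h₂ : ¬ litSat σ c.2 := fun h => hviol (Or.inr h)
  have k₁ := mem_and_ne_of_violated (hU c hc).1 h₁ h₂
  have k₂ := mem_and_ne_of_violated (hU c hc).2 h₂ h₁
  -- flipping an agreeing variable of `U` loses `2a - 1`; by `k₁`, `k₂` the other variable is then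
  -- a disagreeing one of `U`, whose flip gains `2a + 1`
  rw [agreeCount_flipVar, agreeCount_flipVar, flipCount_flipVar, flipCount_flipVar]
  split_ifs <;> simp_all <;> nlinarith [(agreeCount U σstar σ).cast_nonneg (α := ℝ)]

lemma sum_flipCount_wsNext_le {k : ℕ} (hU : ucpClosed Φ {l | l.2 ∈ U ∧ litSat σstar l})
    (σ : V → Bool) :
    ∑ s : Fin k × Bool, (flipCount U σ (wsNext Φ (s.1, s.2) σ) : ℝ) ≤
      ∑ s : Fin k × Bool,
        ((agreeCount U σstar (wsNext Φ (s.1, s.2) σ) : ℝ) ^ 2 -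
          (agreeCount U σstar σ : ℝ) ^ 2) := by
  by_cases h : (violated Φ σ).length = 0
  · simp [wsNext, h, flipCount]
  rw [Fintype.sum_prod_type, Fintype.sum_prod_type]
  refine sum_le_sum fun i _ => ?_
  set c := (violated Φ σ).get ⟨i % (violated Φ σ).length, Nat.mod_lt _ (Nat.pos_of_ne_zero h)⟩
  have hc : c ∈ violated Φ σ := List.get_mem _ _
  simp only [violated, List.mem_filter, decide_eq_true_eq] at hc
  simp only [Fintype.sum_bool, wsNext, dif_neg h, if_true, Bool.false_eq_true, if_false]
  linarith [flipCount_le_agreeCount_sq_gain hU hc.1 hc.2]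

end WalkSATStep

section SeedDriven

variable {S α : Type*}

lemma sum_sum_update_eq [Fintype S] {ι : Type*} [Fintype ι] [DecidableEq ι] (F : (ι → S) → ℝ)
    (i : ι) :
    ∑ ω : ι → S, ∑ s : S, F (Function.update ω i s) = Fintype.card S * ∑ ω, F ω := by
  have hswap : ∑ p : (ι → S) × S, F (Function.update p.1 i p.2) = ∑ p : (ι → S) × S, F p.1 :=
    Fintype.sum_equiv (Function.Involutive.toPerm (fun p => (Function.update p.1 i p.2, p.1 i))
      fun p => by simp) _ _ fun _ => rfl
  rw [← Fintype.sum_prod_type', hswap, Fintype.sum_prod_type]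
  simp [mul_sum, mul_comm]

/-- `X ω t` is the state after `t` steps of the chain `step` run on the seed sequence `ω`. -/
structure IsSeedDriven {N : ℕ} (step : S → α → α) (X : (Fin N → S) → ℕ → α) : Prop where
  init : ∀ ω ω', X ω 0 = X ω' 0
  succ : ∀ t (ht : t < N) ω, X ω (t + 1) = step (ω ⟨t, ht⟩) (X ω t)

namespace IsSeedDriven

variable {N : ℕ} {step : S → α → α} {X : (Fin N → S) → ℕ → α}

lemma update_of_le (hX : IsSeedDriven step X) {i : Fin N} (ω : Fin N → S) (s : S) {t : ℕ}
    (ht : t ≤ i) : X (Function.update ω i s) t = X ω t := by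
  induction t with
  | zero => exact hX.init _ _
  | succ t ih =>
    have htN : t < N := by omega
    rw [hX.succ t htN, hX.succ t htN, ih (by omega), Function.update_of_ne]
    exact Fin.ne_of_val_ne (by simp; omega)

variable [Fintype S] [Nonempty S] (cost : α → α → ℝ) (P : α → ℝ)

lemma sum_cost_le (hX : IsSeedDriven step X)
    (hdrift : ∀ x, ∑ s, cost x (step s x) ≤ ∑ s, (P (step s x) - P x)) {t : ℕ} (ht : t < N) :
    ∑ ω, cost (X ω t) (X ω (t + 1)) ≤ ∑ ω, (P (X ω (t + 1)) - P (X ω t)) := by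
  have hresample : ∀ F : α → α → ℝ, Fintype.card S * ∑ ω, F (X ω t) (X ω (t + 1)) =
      ∑ ω, ∑ s, F (X ω t) (step s (X ω t)) := fun F => by
    -- resampling seed `t` leaves `X ω t` unchanged and makes step `t` a fresh uniform step
    rw [← sum_sum_update_eq _ ⟨t, ht⟩]
    refine sum_congr rfl fun ω _ => sum_congr rfl fun s _ => ?_
    rw [hX.succ t ht, Function.update_self, hX.update_of_le (i := ⟨t, ht⟩) ω s le_rfl]
  refine le_of_mul_le_mul_left ?_ (Nat.cast_pos.2 (Fintype.card_pos (α := S)) : (0 : ℝ) < _)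
  rw [hresample cost, hresample fun x y => P y - P x]
  exact sum_le_sum fun ω _ => hdrift _

lemma sum_sum_cost_le (hX : IsSeedDriven step X)
    (hdrift : ∀ x, ∑ s, cost x (step s x) ≤ ∑ s, (P (step s x) - P x)) :
    ∑ ω, ∑ t ∈ range N, cost (X ω t) (X ω (t + 1)) ≤ ∑ ω, (P (X ω N) - P (X ω 0)) :=
  calc ∑ ω, ∑ t ∈ range N, cost (X ω t) (X ω (t + 1))
      = ∑ t ∈ range N, ∑ ω, cost (X ω t) (X ω (t + 1)) := sum_comm
    _ ≤ ∑ t ∈ range N, ∑ ω, (P (X ω (t + 1)) - P (X ω t)) :=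
      sum_le_sum fun t ht => hX.sum_cost_le cost P hdrift (mem_range.1 ht)
    _ = ∑ ω, (P (X ω N) - P (X ω 0)) := by
      rw [sum_comm]
      exact sum_congr rfl fun ω _ => sum_range_sub (fun t => P (X ω t)) N

end IsSeedDriven

end SeedDriven

section WalkSAT

variable {V : Type} [Fintype V] [DecidableEq V] (Φ : CNF V)

lemma wsState_isSeedDriven :
    IsSeedDriven (fun (s : Fin (Nat.factorial Φ.length) × Bool) σ => wsNext Φ ((s.1 : ℕ), s.2) σ)
      (wsState Φ) :=
  ⟨fun _ _ => rfl, fun t ht _ => by rw [wsState, dif_pos ht]⟩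

lemma wsExp_mono {f g : wsSeedSpace V Φ → ℝ} (h : ∀ ω, f ω ≤ g ω) : wsExp Φ f ≤ wsExp Φ g :=
  div_le_div_of_nonneg_right (sum_le_sum fun ω _ => h ω) (Nat.cast_nonneg _)

lemma wsT_le (ω : wsSeedSpace V Φ) : wsT Φ ω ≤ 100 * Fintype.card V ^ 2 :=
  Nat.sInf_le (Or.inr rfl)

lemma wsN_le_sum_flipCount (ω : wsSeedSpace V Φ) (l : Lit V) :
    wsN Φ ω l ≤ ∑ t ∈ range (100 * Fintype.card V ^ 2),
      flipCount (Set.toFinite (ucpVars Φ l)).toFinset (wsState Φ ω t) (wsState Φ ω (t + 1)) := by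
  rw [wsN, sum_comm, ← Ico_add_one_right_eq_Icc, sum_Ico_eq_sum_range, add_tsub_cancel_right]
  simp only [add_comm 1]
  exact sum_le_sum_of_subset (range_mono (wsT_le Φ ω))

lemma wsExp_sum_flipCount_le {σstar : V → Bool} {U : Finset V}
    (hU : ucpClosed Φ {l | l.2 ∈ U ∧ litSat σstar l}) :
    wsExp Φ (fun ω => ∑ t ∈ range (100 * Fintype.card V ^ 2),
      (flipCount U (wsState Φ ω t) (wsState Φ ω (t + 1)) : ℝ)) ≤ (#U : ℝ) ^ 2 := by
  have hpos : (0 : ℝ) < Fintype.card (wsSeedSpace V Φ) :=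
    Nat.cast_pos.2 (Fintype.card_pos_iff.2 ⟨fun _ => (⟨0, Nat.factorial_pos _⟩, true)⟩)
  have hpot : ∀ σ σ₀ : V → Bool,
      (agreeCount U σstar σ : ℝ) ^ 2 - (agreeCount U σstar σ₀ : ℝ) ^ 2 ≤ (#U : ℝ) ^ 2 :=
    fun σ σ₀ => (sub_le_self _ (sq_nonneg _)).trans
      (pow_le_pow_left₀ (Nat.cast_nonneg _) (Nat.cast_le.2 (agreeCount_le_card U σstar σ)) 2)
  have : Nonempty (Fin (Nat.factorial Φ.length) × Bool) := ⟨(⟨0, Nat.factorial_pos _⟩, true)⟩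
  rw [wsExp, div_le_iff₀ hpos]
  calc _ ≤ ∑ ω : wsSeedSpace V Φ,
        ((agreeCount U σstar (wsState Φ ω (100 * Fintype.card V ^ 2)) : ℝ) ^ 2 -
          (agreeCount U σstar (wsState Φ ω 0) : ℝ) ^ 2) :=
        (wsState_isSeedDriven Φ).sum_sum_cost_le (fun σ σ' => (flipCount U σ σ' : ℝ))
          (fun σ => (agreeCount U σstar σ : ℝ) ^ 2) (sum_flipCount_wsNext_le hU)
    _ ≤ ∑ _ω : wsSeedSpace V Φ, (#U : ℝ) ^ 2 := sum_le_sum fun ω _ => hpot _ _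
    _ = _ := by rw [sum_const, card_univ, nsmul_eq_mul, mul_comm]

end WalkSAT

/-- **Proposition 2.5.** There is a constant `C > 0` such that for every satisfiable 2-CNF `Φ`
with satisfying assignment `σ*` and every variable `x`, the expectation over the random choices
of WalkSAT satisfies `E[N(Φ, σ*(x)·x)] ≤ C · |ℒ(Φ, {σ*(x)·x})|²`. -/
theorem stmt_5 :
    ∃ C : ℝ, 0 < C ∧
      ∀ (V : Type) [Fintype V] [DecidableEq V] (Φ : CNF V), validCNF Φ →
        ∀ σstar : V → Bool, cnfSat σstar Φ →
          ∀ x : V,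
            wsExp Φ (fun ω => (wsN Φ ω (σstar x, x) : ℝ)) ≤
              C * ((ucpLits Φ (σstar x, x)).ncard : ℝ) ^ 2 := by
  refine ⟨1, one_pos, fun V _ _ Φ _ σstar hΦ x => ?_⟩
  set l : Lit V := (σstar x, x)
  set U := (Set.toFinite (ucpVars Φ l)).toFinset
  have hU : ucpClosed Φ {l' | l'.2 ∈ U ∧ litSat σstar l'} := by
    simpa [U, ucpLits_eq_setOf hΦ (show litSat σstar l from rfl)] using
      ucpClosed_ucpLits (Φ := Φ) l
  have hcard : #U ≤ (ucpLits Φ l).ncard := by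
    rw [← Set.ncard_eq_toFinset_card _ (Set.toFinite _)]
    exact Set.ncard_image_le (Set.toFinite _)
  calc wsExp Φ (fun ω => (wsN Φ ω l : ℝ))
      ≤ wsExp Φ (fun ω => ∑ t ∈ range (100 * Fintype.card V ^ 2),
          (flipCount U (wsState Φ ω t) (wsState Φ ω (t + 1)) : ℝ)) :=
        wsExp_mono Φ fun ω => by exact_mod_cast wsN_le_sum_flipCount Φ ω l
    _ ≤ (#U : ℝ) ^ 2 := wsExp_sum_flipCount_le Φ hU
    _ ≤ 1 * ((ucpLits Φ l).ncard : ℝ) ^ 2 := by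
        rw [one_mul]; exact pow_le_pow_left₀ (Nat.cast_nonneg _) (Nat.cast_le.2 hcard) 2
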